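/- In a QoS satisfaction game with homogeneous users (T_n^c = T^c for all n), a strategy profile x is a pure Nash equilibrium if and only if x has no suffering users and the number of satisfied users equals min{N, ∑_{c=1}^C T^c}. -/

import Mathlib

open Finset

/-- Congestion level of channel `c`: number of players choosing `c`. -/
def cong {N C : ℕ} (x : Fin N → Option (Fin C)) (c : Fin C) : ℕ :=
  (Finset.univ.filter fun n => x n = some c).card

/-- Utility with homogeneous users: common threshold `T c` on each channel `c`. -/
def utilH {N C : ℕ} (T : Fin C → ℕ) (x : Fin N → Option (Fin C)) (n : Fin N) : ℤ :=
  match x n with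
  | none => 0
  | some c => if cong x c ≤ T c then 1 else -1

/-- Pure Nash equilibrium. -/
def IsNashH {N C : ℕ} (T : Fin C → ℕ) (x : Fin N → Option (Fin C)) : Prop :=
  ∀ (n : Fin N) (s : Option (Fin C)), utilH T (Function.update x n s) n ≤ utilH T x n

/-- Number of satisfied players. -/
def BH {N C : ℕ} (T : Fin C → ℕ) (x : Fin N → Option (Fin C)) : ℕ :=
  (Finset.univ.filter fun n => utilH T x n = 1).card

lemma utilH_none {N C : ℕ} (T : Fin C → ℕ) (x : Fin N → Option (Fin C)) (n : Fin N)
    (h : x n = none) : utilH T x n = 0 := by simp [utilH, h]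

lemma utilH_some {N C : ℕ} (T : Fin C → ℕ) (x : Fin N → Option (Fin C)) (n : Fin N)
    (c : Fin C) (h : x n = some c) :
    utilH T x n = if cong x c ≤ T c then 1 else -1 := by simp [utilH, h]

lemma utilH_le_one {N C : ℕ} (T : Fin C → ℕ) (x : Fin N → Option (Fin C)) (n : Fin N) :
    utilH T x n ≤ 1 := by
  unfold utilH
  cases x n with
  | none => norm_num
  | some c => dsimp only; split <;> norm_num

lemma cong_update_none_add {N C : ℕ} (x : Fin N → Option (Fin C)) (n : Fin N) (c : Fin C)
    (h : x n = none) : cong (Function.update x n (some c)) c = cong x c + 1 := by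
  classical
  have hset : (univ.filter fun m => Function.update x n (some c) m = some c)
      = insert n (univ.filter fun m => x m = some c) := by
    ext m
    by_cases hm : m = n
    · subst hm; simp [Function.update_self]
    · simp [Function.update_of_ne hm, hm]
  rw [cong, hset, Finset.card_insert_of_notMem (by simp [h])]
  rfl

lemma card_nondormant_eq {N C : ℕ} (x : Fin N → Option (Fin C)) :
    (univ.filter fun n => x n ≠ none).card = ∑ c : Fin C, cong x c := by
  classical
  rw [Finset.card_eq_sum_card_fiberwise
      (f := x) (t := (univ : Finset (Fin C)).image some)
      (by intro n hn
          simp only [Finset.mem_coe, mem_filter, mem_univ, true_and] at hn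
          cases hx : x n with
          | none => exact absurd hx hn
          | some c => simp [hx]),
    Finset.sum_image (by intro a _ b _ h; exact Option.some_injective _ h)]
  refine Finset.sum_congr rfl fun c _ => ?_
  rw [Finset.filter_filter, cong]
  congr 1
  apply Finset.filter_congr
  intro n _
  constructor
  · rintro ⟨_, h⟩; exact h
  · intro h; exact ⟨by simp [h], h⟩

lemma BH_eq_sum_cong {N C : ℕ} (T : Fin C → ℕ) (x : Fin N → Option (Fin C))
    (hns : ∀ n : Fin N, utilH T x n ≠ -1) :
    BH T x = ∑ c : Fin C, cong x c := by
  rw [← card_nondormant_eq, BH]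
  congr 1
  apply Finset.filter_congr
  intro n _
  cases hx : x n with
  | none => simp [utilH_none T x n hx, hx]
  | some c =>
    have h1 := utilH_some T x n c hx
    have h2 := hns n
    simp only [hx, ne_eq, reduceCtorEq, not_false_eq_true, iff_true]
    rw [h1] at h2 ⊢
    split at h2
    · rename_i hcond; exact if_pos hcond
    · simp at h2

lemma cong_le_of_nosuffer {N C : ℕ} (T : Fin C → ℕ) (x : Fin N → Option (Fin C))
    (hns : ∀ n : Fin N, utilH T x n ≠ -1) (c : Fin C) : cong x c ≤ T c := by
  by_contra h
  push_neg at h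
  have hpos : 0 < cong x c := lt_of_le_of_lt (Nat.zero_le _) h
  rw [cong, Finset.card_pos] at hpos
  obtain ⟨n, hn⟩ := hpos
  simp only [mem_filter, mem_univ, true_and] at hn
  have := utilH_some T x n c hn
  rw [if_neg (not_le.mpr h)] at this
  exact hns n this

/-- With homogeneous users, a profile is a pure Nash equilibrium iff it has no
suffering users and the number of satisfied users is `min {N, ∑_c T^c}`. -/
theorem homog_nash_iff {N C : ℕ} (T : Fin C → ℕ) (x : Fin N → Option (Fin C)) :
    IsNashH T x ↔
      ((∀ n : Fin N, utilH T x n ≠ -1) ∧ BH T x = min N (∑ c : Fin C, T c)) := by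
  classical
  constructor
  · intro hnash
    have hns : ∀ n : Fin N, utilH T x n ≠ -1 := by
      intro n hn
      have := hnash n none
      rw [utilH_none T _ n (Function.update_self n none x), hn] at this
      norm_num at this
    refine ⟨hns, ?_⟩
    have hsum := BH_eq_sum_cong T x hns
    have hle1 : BH T x ≤ N := by
      have := Finset.card_filter_le (univ : Finset (Fin N)) (fun n => utilH T x n = 1)
      simpa [BH] using this
    have hle2 : BH T x ≤ ∑ c : Fin C, T c := by
      rw [hsum]
      exact Finset.sum_le_sum fun c _ => cong_le_of_nosuffer T x hns c
    refine le_antisymm (le_min hle1 hle2) ?_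
    by_contra hlt
    push_neg at hlt
    rw [lt_min_iff] at hlt
    obtain ⟨hltN, hltS⟩ := hlt
    -- there is a dormant player
    have hBH : BH T x = (univ.filter fun n => x n ≠ none).card := by
      rw [hsum, card_nondormant_eq]
    have hdorm : ∃ n : Fin N, x n = none := by
      by_contra hall
      push_neg at hall
      have : (univ.filter fun n => x n ≠ none) = univ := by
        apply Finset.filter_true_of_mem
        intro n _
        exact hall n
      rw [hBH, this, Finset.card_univ, Fintype.card_fin] at hltN
      exact lt_irrefl _ hltN
    obtain ⟨n, hn⟩ := hdorm
    -- there is an under-capacity channel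
    have hch : ∃ c : Fin C, cong x c < T c := by
      by_contra hall
      push_neg at hall
      have : ∑ c : Fin C, T c ≤ ∑ c : Fin C, cong x c :=
        Finset.sum_le_sum fun c _ => hall c
      rw [← hsum] at this
      omega
    obtain ⟨c, hc⟩ := hch
    have hdev := hnash n (some c)
    rw [utilH_none T x n hn,
      utilH_some T _ n c (Function.update_self n (some c) x),
      cong_update_none_add x n c hn, if_pos (by omega)] at hdev
    norm_num at hdev
  · rintro ⟨hns, hmin⟩
    intro n s
    cases hx : x n with
    | some c0 =>
      have h1 := utilH_some T x n c0 hx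
      rw [h1, if_pos (cong_le_of_nosuffer T x hns c0)]
      exact utilH_le_one T _ n
    | none =>
      rw [utilH_none T x n hx]
      cases s with
      | none => rw [utilH_none T _ n (Function.update_self n none x)]
      | some c =>
        rw [utilH_some T _ n c (Function.update_self n (some c) x),
          cong_update_none_add x n c hx]
        split
        · exfalso
          rename_i hcc
          have hc : cong x c < T c := by omega
          have hsum := BH_eq_sum_cong T x hns
          have hltS : BH T x < ∑ c : Fin C, T c := by
            rw [hsum]
            apply Finset.sum_lt_sum (fun d _ => cong_le_of_nosuffer T x hns d)
            exact ⟨c, Finset.mem_univ c, hc⟩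
          have hltN : BH T x < N := by
            have hBH : BH T x = (univ.filter fun m => x m ≠ none).card := by
              rw [hsum, card_nondormant_eq]
            rw [hBH]
            have hss : (univ.filter fun m => x m ≠ none) ⊂ univ := by
              refine Finset.ssubset_univ_iff.mpr ?_
              intro heq
              have : n ∈ univ.filter fun m => x m ≠ none := by
                rw [heq]; exact Finset.mem_univ n
              simp only [mem_filter] at this
              exact this.2 hx
            have := Finset.card_lt_card hss
            simpa using this
          have hcontra := lt_min hltN hltS
          rw [hmin] at hcontra
          exact lt_irrefl _ hcontra
        · norm_num
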